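/- Let L be a metric flag edge-labeled triangulation of S², let s and s' be 4-Euclidean vertices of L joined by an edge, let t and b be the two vertices such that {s,s',t} and {s,s',b} are the two 2-simplices of L containing the edge {s,s'}, let v be the vertex of the link 4-cycle of s opposite s', and let v' be the vertex of the link 4-cycle of s' opposite s. If v = v', then L is the suspension of a 3-gon; more precisely, L has vertex set {s, s', t, b, v}, with suspension points t and b and 3-gon s, v, s'. -/
import Mathlib


open Finset

/-- A combinatorial triangulation of the 2-sphere: a finite simplicial complex all of
whose maximal simplices are 2-simplices (triangles), such that every edge is contained
in exactly two 2-simplices, the link of every vertex is connected, the complex is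
connected, and the Euler characteristic is `2`.  By the classification of closed
surfaces, these conditions hold precisely when the geometric realization of the
complex is homeomorphic to `S²`.  The complex is recorded by its set of 2-simplices
(`faces`); its simplices are the vertices, the edges (2-element subsets of faces) and
the faces. -/
structure S2Triangulation (V : Type) [Fintype V] [DecidableEq V] : Type where
  /-- The 2-simplices. -/
  faces : Finset (Finset V)
  card_eq_three : ∀ f ∈ faces, f.card = 3
  /-- Every vertex lies in some 2-simplex. -/
  vertex_mem : ∀ v : V, ∃ f ∈ faces, v ∈ f
  /-- Every edge lies in exactly two 2-simplices. -/
  edge_two_faces : ∀ e : Finset V, e.card = 2 → (∃ f ∈ faces, e ⊆ f) →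
    (faces.filter fun f => e ⊆ f).card = 2
  /-- The link of every vertex is connected (so, with the other axioms, a cycle). -/
  link_connected : ∀ s u w : V,
    (s ≠ u ∧ ∃ f ∈ faces, s ∈ f ∧ u ∈ f) →
    (s ≠ w ∧ ∃ f ∈ faces, s ∈ f ∧ w ∈ f) →
    Relation.ReflTransGen (fun a b : V => a ≠ b ∧ ({s, a, b} : Finset V) ∈ faces) u w
  /-- The complex is connected. -/
  conn : ∀ u w : V,
    Relation.ReflTransGen (fun a b : V => a ≠ b ∧ ∃ f ∈ faces, a ∈ f ∧ b ∈ f) u w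
  /-- Euler characteristic 2:  #vertices - #edges + #faces = 2. -/
  euler : Fintype.card V + faces.card
      = (Finset.univ.filter fun e : Finset V => e.card = 2 ∧ ∃ f ∈ faces, e ⊆ f).card + 2

namespace S2Triangulation

variable {V : Type} [Fintype V] [DecidableEq V]

/-- Two vertices are adjacent (joined by an edge of `L`) if they are distinct and lie
in a common 2-simplex. -/
def Adj (L : S2Triangulation V) (u w : V) : Prop :=
  u ≠ w ∧ ∃ f ∈ L.faces, u ∈ f ∧ w ∈ f

instance (L : S2Triangulation V) (u w : V) : Decidable (L.Adj u w) :=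
  inferInstanceAs (Decidable (u ≠ w ∧ ∃ f ∈ L.faces, u ∈ f ∧ w ∈ f))

/-- The vertex set of the link of a vertex `s`. -/
def linkVerts (L : S2Triangulation V) (s : V) : Finset V :=
  Finset.univ.filter fun u => L.Adj s u

/-- An edge labeling of `L`: an assignment of an integer `m u w = m w u ≥ 2` to each
edge `{u, w}` of `L`. -/
structure EdgeLabeling (L : S2Triangulation V) : Type where
  m : V → V → ℕ
  symm : ∀ u w : V, m u w = m w u
  two_le : ∀ u w : V, L.Adj u w → 2 ≤ m u w

/-- The labeled complex is metric flag: three pairwise adjacent (distinct) vertices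
span a 2-simplex if and only if the sum of the reciprocals of the three labels
exceeds `1`. -/
def MetricFlag (L : S2Triangulation V) (M : EdgeLabeling L) : Prop :=
  ∀ s t u : V, L.Adj s t → L.Adj t u → L.Adj u s →
    (({s, t, u} : Finset V) ∈ L.faces ↔
      1 < (M.m s t : ℚ)⁻¹ + (M.m t u : ℚ)⁻¹ + (M.m u s : ℚ)⁻¹)

/-- `s` is a 3-Euclidean vertex: it has valence 3 and its link is a 3-cycle
`s₀, s₁, s₂` with `1/m s₀ s₁ + 1/m s₁ s₂ + 1/m s₂ s₀ = 1`. -/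
def Is3Euclidean (L : S2Triangulation V) (M : EdgeLabeling L) (s : V) : Prop :=
  ∃ s0 s1 s2 : V, s0 ≠ s1 ∧ s1 ≠ s2 ∧ s0 ≠ s2 ∧
    L.linkVerts s = {s0, s1, s2} ∧
    ({s, s0, s1} : Finset V) ∈ L.faces ∧ ({s, s1, s2} : Finset V) ∈ L.faces ∧
    ({s, s2, s0} : Finset V) ∈ L.faces ∧
    (M.m s0 s1 : ℚ)⁻¹ + (M.m s1 s2 : ℚ)⁻¹ + (M.m s2 s0 : ℚ)⁻¹ = 1

/-- The link of `s` is the 4-cycle `s₀, s₁, s₂, s₃` and all four consecutive labels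
are `2`; i.e. `s` is 4-Euclidean with link 4-cycle `s₀, s₁, s₂, s₃`. -/
def Is4EuclideanCycle (L : S2Triangulation V) (M : EdgeLabeling L)
    (s s0 s1 s2 s3 : V) : Prop :=
  s0 ≠ s1 ∧ s0 ≠ s2 ∧ s0 ≠ s3 ∧ s1 ≠ s2 ∧ s1 ≠ s3 ∧ s2 ≠ s3 ∧
  L.linkVerts s = {s0, s1, s2, s3} ∧
  ({s, s0, s1} : Finset V) ∈ L.faces ∧ ({s, s1, s2} : Finset V) ∈ L.faces ∧
  ({s, s2, s3} : Finset V) ∈ L.faces ∧ ({s, s3, s0} : Finset V) ∈ L.faces ∧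
  ({s, s0, s2} : Finset V) ∉ L.faces ∧ ({s, s1, s3} : Finset V) ∉ L.faces ∧
  M.m s0 s1 = 2 ∧ M.m s1 s2 = 2 ∧ M.m s2 s3 = 2 ∧ M.m s3 s0 = 2

/-- `s` is a 4-Euclidean vertex: it has valence 4 and its link is a 4-cycle
`s₀, s₁, s₂, s₃` with `m sᵢ sᵢ₊₁ = 2` for `i = 0, 1, 2, 3` (mod 4). -/
def Is4Euclidean (L : S2Triangulation V) (M : EdgeLabeling L) (s : V) : Prop :=
  ∃ s0 s1 s2 s3 : V, Is4EuclideanCycle L M s s0 s1 s2 s3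

/-- A Euclidean vertex is one that is 3-Euclidean or 4-Euclidean. -/
def IsEuclidean (L : S2Triangulation V) (M : EdgeLabeling L) (s : V) : Prop :=
  Is3Euclidean L M s ∨ Is4Euclidean L M s

/-- `s₀, s₁, s₂, s₃` is an empty Euclidean 4-circuit: a 4-cycle in the 1-skeleton with
all four labels `2`, which is not the vertex set of the link of any vertex and is not
the boundary of the union of two 2-simplices of `L` sharing an edge. -/
def IsEmptyEuclidean4Circuit (L : S2Triangulation V) (M : EdgeLabeling L)
    (s0 s1 s2 s3 : V) : Prop :=
  s0 ≠ s1 ∧ s0 ≠ s2 ∧ s0 ≠ s3 ∧ s1 ≠ s2 ∧ s1 ≠ s3 ∧ s2 ≠ s3 ∧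
  L.Adj s0 s1 ∧ L.Adj s1 s2 ∧ L.Adj s2 s3 ∧ L.Adj s3 s0 ∧
  M.m s0 s1 = 2 ∧ M.m s1 s2 = 2 ∧ M.m s2 s3 = 2 ∧ M.m s3 s0 = 2 ∧
  (∀ x : V, L.linkVerts x ≠ {s0, s1, s2, s3}) ∧
  ¬ ((({s0, s1, s2} : Finset V) ∈ L.faces ∧ ({s0, s2, s3} : Finset V) ∈ L.faces) ∨
     (({s1, s2, s3} : Finset V) ∈ L.faces ∧ ({s1, s3, s0} : Finset V) ∈ L.faces))

/-- `L` is the suspension of the `n`-gon `c₀, …, c_{n-1}` with suspension points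
`p, q`: the vertex set of `L` is `{p, q, c₀, …, c_{n-1}}` (all distinct), `p` and `q`
are not joined by an edge, `c₀, …, c_{n-1}` is an `n`-cycle in the 1-skeleton, and
the 2-simplices of `L` are exactly the sets `{p, cᵢ, cᵢ₊₁}` and `{q, cᵢ, cᵢ₊₁}`
for `i` mod `n`. -/
def IsSuspensionCycle (L : S2Triangulation V) {n : ℕ} (p q : V) (c : ZMod n → V) :
    Prop :=
  p ≠ q ∧ Function.Injective c ∧ (∀ i, p ≠ c i) ∧ (∀ i, q ≠ c i) ∧
  (∀ v : V, v = p ∨ v = q ∨ ∃ i, v = c i) ∧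
  ¬ L.Adj p q ∧ (∀ i, L.Adj (c i) (c (i + 1))) ∧
  (∀ f : Finset V, f ∈ L.faces ↔
    ∃ i, f = {p, c i, c (i + 1)} ∨ f = {q, c i, c (i + 1)})

/-- `L` is the suspension of an `n`-gon. -/
def IsSuspensionOfNGon (L : S2Triangulation V) (n : ℕ) : Prop :=
  ∃ (p q : V) (c : ZMod n → V), IsSuspensionCycle L p q c

end S2Triangulation
open Finset

section Aux
variable {V : Type} [DecidableEq V]

lemma triple_swap23 (a b c : V) : ({a, b, c} : Finset V) = {a, c, b} := by
  ext z; simp; tauto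

lemma triple_swap12 (a b c : V) : ({a, b, c} : Finset V) = {b, a, c} := by
  ext z; simp; tauto

lemma triple_rot (a b c : V) : ({a, b, c} : Finset V) = {b, c, a} := by
  ext z; simp; tauto

end Aux

namespace S2Triangulation
variable {V : Type} [Fintype V] [DecidableEq V]

/-- If an edge lies in two distinct faces, every face containing it is one of them. -/
lemma face_eq_of_edge (L : S2Triangulation V) {e f1 f2 : Finset V}
    (h1 : f1 ∈ L.faces) (h2 : f2 ∈ L.faces) (hne : f1 ≠ f2)
    (he : e.card = 2) (he1 : e ⊆ f1) (he2 : e ⊆ f2)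
    {f : Finset V} (hf : f ∈ L.faces) (hef : e ⊆ f) : f = f1 ∨ f = f2 := by
  have hcard := L.edge_two_faces e he ⟨f1, h1, he1⟩
  have hsub : ({f1, f2} : Finset (Finset V)) ⊆ L.faces.filter fun f => e ⊆ f := by
    intro g hg
    rcases Finset.mem_insert.1 hg with rfl | hg
    · exact Finset.mem_filter.2 ⟨h1, he1⟩
    · rcases Finset.mem_singleton.1 hg with rfl
      exact Finset.mem_filter.2 ⟨h2, he2⟩
  have hc2 : ({f1, f2} : Finset (Finset V)).card = 2 := Finset.card_pair hne
  have heqset : ({f1, f2} : Finset (Finset V)) = L.faces.filter fun f => e ⊆ f :=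
    Finset.eq_of_subset_of_card_le hsub (by omega)
  have : f ∈ ({f1, f2} : Finset (Finset V)) := by
    rw [heqset]; exact Finset.mem_filter.2 ⟨hf, hef⟩
  simpa using this

/-- Faces containing a 4-Euclidean vertex are the four faces of its link cycle. -/
lemma face_of_4E (L : S2Triangulation V) (M : EdgeLabeling L) {s s0 s1 s2 s3 : V}
    (h : Is4EuclideanCycle L M s s0 s1 s2 s3) {f : Finset V}
    (hf : f ∈ L.faces) (hsf : s ∈ f) :
    f = {s, s0, s1} ∨ f = {s, s1, s2} ∨ f = {s, s2, s3} ∨ f = {s, s3, s0} := by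
  obtain ⟨h01, h02, h03, h12, h13, h23, hlink, hf01, hf12, hf23, hf30, hn02, hn13, -⟩ := h
  have hcard := L.card_eq_three f hf
  have hmem : ∀ u ∈ f, u ≠ s → u = s0 ∨ u = s1 ∨ u = s2 ∨ u = s3 := by
    intro u hu hus
    have : u ∈ L.linkVerts s := by
      simp only [linkVerts, Finset.mem_filter, Finset.mem_univ, true_and]
      exact ⟨hus.symm, f, hf, hsf, hu⟩
    rw [hlink] at this; simpa using this
  have herase : (f.erase s).card = 2 := by
    rw [Finset.card_erase_of_mem hsf, hcard]
  obtain ⟨x, y, hxy, hxyeq⟩ := Finset.card_eq_two.1 herase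
  have hfins : f = {s, x, y} := by
    rw [← Finset.insert_erase hsf, hxyeq]
  have hx : x ∈ f.erase s := by rw [hxyeq]; simp
  have hy : y ∈ f.erase s := by rw [hxyeq]; simp
  have hxs := Finset.ne_of_mem_erase hx
  have hys := Finset.ne_of_mem_erase hy
  have hx4 := hmem x (Finset.mem_of_mem_erase hx) hxs
  have hy4 := hmem y (Finset.mem_of_mem_erase hy) hys
  rcases hx4 with hx4 | hx4 | hx4 | hx4 <;> rcases hy4 with hy4 | hy4 | hy4 | hy4 <;>
    rw [hx4, hy4] at hfins <;>
    first
      | exact absurd (hx4.trans hy4.symm) hxy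
      | exact Or.inl hfins
      | exact Or.inl (hfins.trans (triple_swap23 _ _ _))
      | exact Or.inr (Or.inl hfins)
      | exact Or.inr (Or.inl (hfins.trans (triple_swap23 _ _ _)))
      | exact Or.inr (Or.inr (Or.inl hfins))
      | exact Or.inr (Or.inr (Or.inl (hfins.trans (triple_swap23 _ _ _))))
      | exact Or.inr (Or.inr (Or.inr hfins))
      | exact Or.inr (Or.inr (Or.inr (hfins.trans (triple_swap23 _ _ _))))
      | exact absurd (show ({s, s0, s2} : Finset V) ∈ L.faces from hfins ▸ hf) hn02
      | exact absurd (show ({s, s0, s2} : Finset V) ∈ L.faces from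
          (hfins.trans (triple_swap23 s s2 s0)) ▸ hf) hn02
      | exact absurd (show ({s, s1, s3} : Finset V) ∈ L.faces from hfins ▸ hf) hn13
      | exact absurd (show ({s, s1, s3} : Finset V) ∈ L.faces from
          (hfins.trans (triple_swap23 s s3 s1)) ▸ hf) hn13

end S2Triangulation

set_option maxHeartbeats 2000000 in
open S2Triangulation in
/-- Let `L` be a metric flag edge-labeled triangulation of `S²`,
let `s` and `s'` be 4-Euclidean vertices joined by an edge, let `t` and `b` be the
two vertices with `{s, s', t}` and `{s, s', b}` the two 2-simplices containing the
edge `{s, s'}`, let `v` be the vertex of the link 4-cycle of `s` opposite `s'` (so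
the link 4-cycle of `s` is `s', t, v, b`), and let `v'` be the vertex of the link
4-cycle of `s'` opposite `s`.  If `v = v'`, then `L` is the suspension of a 3-gon;
more precisely, `L` has vertex set `{s, s', t, b, v}`, with suspension points `t`
and `b` and 3-gon `s, v, s'`. -/
theorem coincident_opposite_vertices_give_suspension_of_3gon
    {V : Type} [Fintype V] [DecidableEq V]
    (L : S2Triangulation V) (M : EdgeLabeling L) (hflag : MetricFlag L M)
    (s s' t b v v' : V)
    (hadj : L.Adj s s')
    (hs : Is4EuclideanCycle L M s s' t v b)
    (hs' : Is4EuclideanCycle L M s' s t v' b)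
    (heq : v = v') :
    IsSuspensionCycle L t b
      (fun i : ZMod 3 => if i = 0 then s else if i = 1 then v else s') := by
  subst heq
  have hss' : s ≠ s' := hadj.1
  obtain ⟨hs't, hs'v, hs'b, htv, htb, hvb, hlinkS, mF1, mF2, mF4, mF6, hnsv, hntb, -⟩ := id hs
  obtain ⟨hst, hsv, hsb, -, -, -, hlinkS', mF1', mF3, mF5, mF6', hn'sv, hn'tb, -⟩ := id hs'
  -- symmetric ne facts
  have hs's : s' ≠ s := hss'.symm
  have hts : t ≠ s := hst.symm
  have hvs : v ≠ s := hsv.symm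
  have hbs : b ≠ s := hsb.symm
  have hts' : t ≠ s' := hs't.symm
  have hvs' : v ≠ s' := hs'v.symm
  have hbs' : b ≠ s' := hs'b.symm
  have hvt : v ≠ t := htv.symm
  have hbt : b ≠ t := htb.symm
  have hbv : b ≠ v := hvb.symm
  -- face distinctness
  have hF12 : ({s, s', t} : Finset V) ≠ {s, t, v} := fun h => by
    have : s' ∈ ({s, t, v} : Finset V) := h ▸ (by simp : s' ∈ ({s, s', t} : Finset V))
    simp [hs's, hs't, hs'v] at this
  have hF13 : ({s, s', t} : Finset V) ≠ {s', t, v} := fun h => by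
    have : s ∈ ({s', t, v} : Finset V) := h ▸ (by simp : s ∈ ({s, s', t} : Finset V))
    simp [hss', hst, hsv] at this
  have hF23 : ({s, t, v} : Finset V) ≠ {s', t, v} := fun h => by
    have : s ∈ ({s', t, v} : Finset V) := h ▸ (by simp : s ∈ ({s, t, v} : Finset V))
    simp [hss', hst, hsv] at this
  have hF24 : ({s, t, v} : Finset V) ≠ {s, v, b} := fun h => by
    have : t ∈ ({s, v, b} : Finset V) := h ▸ (by simp : t ∈ ({s, t, v} : Finset V))
    simp [hts, htv, htb] at this
  have hF35 : ({s', t, v} : Finset V) ≠ {s', v, b} := fun h => by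
    have : t ∈ ({s', v, b} : Finset V) := h ▸ (by simp : t ∈ ({s', t, v} : Finset V))
    simp [hts', htv, htb] at this
  have hF45 : ({s, v, b} : Finset V) ≠ {s', v, b} := fun h => by
    have : s ∈ ({s', v, b} : Finset V) := h ▸ (by simp : s ∈ ({s, v, b} : Finset V))
    simp [hss', hsv, hsb] at this
  have hF46 : ({s, v, b} : Finset V) ≠ {s, b, s'} := fun h => by
    have : v ∈ ({s, b, s'} : Finset V) := h ▸ (by simp : v ∈ ({s, v, b} : Finset V))
    simp [hvs, hvb, hvs'] at this
  have hF65 : ({s, b, s'} : Finset V) ≠ {s', v, b} := fun h => by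
    have : s ∈ ({s', v, b} : Finset V) := h ▸ (by simp : s ∈ ({s, b, s'} : Finset V))
    simp [hss', hsv, hsb] at this
  -- generic resolver for edges in two known faces
  have res : ∀ (p q : V) (f1 f2 : Finset V), p ≠ q → f1 ∈ L.faces → f2 ∈ L.faces →
      f1 ≠ f2 → p ∈ f1 → q ∈ f1 → p ∈ f2 → q ∈ f2 →
      ∀ f ∈ L.faces, p ∈ f → q ∈ f → f = f1 ∨ f = f2 := by
    intro p q f1 f2 hpq h1 h2 hne hp1 hq1 hp2 hq2 f hf hp hq
    exact L.face_eq_of_edge h1 h2 hne (Finset.card_pair hpq)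
      (by simp [Finset.insert_subset_iff, hp1, hq1])
      (by simp [Finset.insert_subset_iff, hp2, hq2]) hf
      (by simp [Finset.insert_subset_iff, hp, hq])
  have r_ts := res t s {s, s', t} {s, t, v} hts mF1 mF2 hF12
    (by simp) (by simp) (by simp) (by simp)
  have r_ts' := res t s' {s, s', t} {s', t, v} hts' mF1 mF3 hF13
    (by simp) (by simp) (by simp) (by simp)
  have r_tv := res t v {s, t, v} {s', t, v} htv mF2 mF3 hF23
    (by simp) (by simp) (by simp) (by simp)
  have r_vs := res v s {s, t, v} {s, v, b} hvs mF2 mF4 hF24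
    (by simp) (by simp) (by simp) (by simp)
  have r_vs' := res v s' {s', t, v} {s', v, b} hvs' mF3 mF5 hF35
    (by simp) (by simp) (by simp) (by simp)
  have r_vb := res v b {s, v, b} {s', v, b} hvb mF4 mF5 hF45
    (by simp) (by simp) (by simp) (by simp)
  have r_bs := res b s {s, v, b} {s, b, s'} hbs mF4 mF6 hF46
    (by simp) (by simp) (by simp) (by simp)
  have r_bs' := res b s' {s, b, s'} {s', v, b} hbs' mF6 mF5 hF65
    (by simp) (by simp) (by simp) (by simp)
  -- in a face {x, a, c} the vertex a differs from x
  have hne_of_face : ∀ x a c : V, ({x, a, c} : Finset V) ∈ L.faces → a ≠ x := by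
    intro x a c hg h
    subst h
    have h3 := L.card_eq_three _ hg
    rw [Finset.insert_idem] at h3
    have := Finset.card_insert_le a ({c} : Finset V)
    simp at this; omega
  -- the link of t is {s, s', v}
  have keyT : ∀ u : V,
      Relation.ReflTransGen (fun a b : V => a ≠ b ∧ ({t, a, b} : Finset V) ∈ L.faces) u s →
      u = s ∨ u = s' ∨ u = v := by
    intro u hu
    induction hu using Relation.ReflTransGen.head_induction_on with
    | refl => exact Or.inl rfl
    | @head a c h' _ ih =>
      obtain ⟨hac, hg⟩ := h'
      have hat : a ≠ t := hne_of_face t a c hg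
      have hamem : a ∈ ({t, a, c} : Finset V) := by simp
      rcases ih with h | h | h <;> rw [h] at hg hac hamem
      · rcases r_ts _ hg (by simp) (by simp) with hgeq | hgeq <;>
          · have := hgeq ▸ hamem; simp at this; clear * - this hac hat; tauto
      · rcases r_ts' _ hg (by simp) (by simp) with hgeq | hgeq <;>
          · have := hgeq ▸ hamem; simp at this; clear * - this hac hat; tauto
      · rcases r_tv _ hg (by simp) (by simp) with hgeq | hgeq <;>
          · have := hgeq ▸ hamem; simp at this; clear * - this hac hat; tauto
  have hT : ∀ f ∈ L.faces, t ∈ f → f = {s, s', t} ∨ f = {s, t, v} ∨ f = {s', t, v} := by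
    intro f hf htf
    have hcard := L.card_eq_three f hf
    have hne : (f.erase t).Nonempty := by
      rw [← Finset.card_pos, Finset.card_erase_of_mem htf, hcard]; norm_num
    obtain ⟨x, hx⟩ := hne
    have hxt := Finset.ne_of_mem_erase hx
    have hxf := Finset.mem_of_mem_erase hx
    have hpath := L.link_connected t x s ⟨hxt.symm, f, hf, htf, hxf⟩
      ⟨hts, {s, s', t}, mF1, by simp, by simp⟩
    rcases keyT x hpath with h | h | h <;> rw [h] at hxf
    · rcases r_ts f hf htf hxf with h1 | h1 <;> (clear * - h1; tauto)
    · rcases r_ts' f hf htf hxf with h1 | h1 <;> (clear * - h1; tauto)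
    · rcases r_tv f hf htf hxf with h1 | h1 <;> (clear * - h1; tauto)
  -- the link of b is {s, s', v}
  have keyB : ∀ u : V,
      Relation.ReflTransGen (fun a b' : V => a ≠ b' ∧ ({b, a, b'} : Finset V) ∈ L.faces) u s →
      u = s ∨ u = s' ∨ u = v := by
    intro u hu
    induction hu using Relation.ReflTransGen.head_induction_on with
    | refl => exact Or.inl rfl
    | @head a c h' _ ih =>
      obtain ⟨hac, hg⟩ := h'
      have hab : a ≠ b := hne_of_face b a c hg
      have hamem : a ∈ ({b, a, c} : Finset V) := by simp
      rcases ih with h | h | h <;> rw [h] at hg hac hamem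
      · rcases r_bs _ hg (by simp) (by simp) with hgeq | hgeq <;>
          · have := hgeq ▸ hamem; simp at this; clear * - this hac hab; tauto
      · rcases r_bs' _ hg (by simp) (by simp) with hgeq | hgeq <;>
          · have := hgeq ▸ hamem; simp at this; clear * - this hac hab; tauto
      · rcases r_vb _ hg (by simp) (by simp) with hgeq | hgeq <;>
          · have := hgeq ▸ hamem; simp at this; clear * - this hac hab; tauto
  have hB : ∀ f ∈ L.faces, b ∈ f → f = {s, v, b} ∨ f = {s', v, b} ∨ f = {s, b, s'} := by
    intro f hf hbf
    have hcard := L.card_eq_three f hf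
    have hne : (f.erase b).Nonempty := by
      rw [← Finset.card_pos, Finset.card_erase_of_mem hbf, hcard]; norm_num
    obtain ⟨x, hx⟩ := hne
    have hxb := Finset.ne_of_mem_erase hx
    have hxf := Finset.mem_of_mem_erase hx
    have hpath := L.link_connected b x s ⟨hxb.symm, f, hf, hbf, hxf⟩
      ⟨hbs, {s, v, b}, mF4, by simp, by simp⟩
    rcases keyB x hpath with h | h | h <;> rw [h] at hxf
    · rcases r_bs f hf hbf hxf with h1 | h1 <;> (clear * - h1; tauto)
    · rcases r_bs' f hf hbf hxf with h1 | h1 <;> (clear * - h1; tauto)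
    · rcases r_vb f hf hxf hbf with h1 | h1 <;> (clear * - h1; tauto)
  -- the link of v is {s, s', t, b}
  have keyV : ∀ u : V,
      Relation.ReflTransGen (fun a b' : V => a ≠ b' ∧ ({v, a, b'} : Finset V) ∈ L.faces) u s →
      u = s ∨ u = s' ∨ u = t ∨ u = b := by
    intro u hu
    induction hu using Relation.ReflTransGen.head_induction_on with
    | refl => exact Or.inl rfl
    | @head a c h' _ ih =>
      obtain ⟨hac, hg⟩ := h'
      have hav : a ≠ v := hne_of_face v a c hg
      have hamem : a ∈ ({v, a, c} : Finset V) := by simp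
      rcases ih with h | h | h | h <;> rw [h] at hg hac hamem
      · rcases r_vs _ hg (by simp) (by simp) with hgeq | hgeq <;>
          · have := hgeq ▸ hamem; simp at this; clear * - this hac hav; tauto
      · rcases r_vs' _ hg (by simp) (by simp) with hgeq | hgeq <;>
          · have := hgeq ▸ hamem; simp at this; clear * - this hac hav; tauto
      · rcases r_tv _ hg (by simp) (by simp) with hgeq | hgeq <;>
          · have := hgeq ▸ hamem; simp at this; clear * - this hac hav; tauto
      · rcases r_vb _ hg (by simp) (by simp) with hgeq | hgeq <;>
          · have := hgeq ▸ hamem; simp at this; clear * - this hac hav; tauto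
  have hV : ∀ f ∈ L.faces, v ∈ f →
      f = {s, t, v} ∨ f = {s', t, v} ∨ f = {s, v, b} ∨ f = {s', v, b} := by
    intro f hf hvf
    have hcard := L.card_eq_three f hf
    have hne : (f.erase v).Nonempty := by
      rw [← Finset.card_pos, Finset.card_erase_of_mem hvf, hcard]; norm_num
    obtain ⟨x, hx⟩ := hne
    have hxv := Finset.ne_of_mem_erase hx
    have hxf := Finset.mem_of_mem_erase hx
    have hpath := L.link_connected v x s ⟨hxv.symm, f, hf, hvf, hxf⟩
      ⟨hvs, {s, t, v}, mF2, by simp, by simp⟩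
    rcases keyV x hpath with h | h | h | h <;> rw [h] at hxf
    · rcases r_vs f hf hvf hxf with h1 | h1 <;> (clear * - h1; tauto)
    · rcases r_vs' f hf hvf hxf with h1 | h1 <;> (clear * - h1; tauto)
    · rcases r_tv f hf hxf hvf with h1 | h1 <;> (clear * - h1; tauto)
    · rcases r_vb f hf hvf hxf with h1 | h1 <;> (clear * - h1; tauto)
  -- classification of all faces meeting {s, s', t, v, b}
  have hclass : ∀ f ∈ L.faces, ∀ w ∈ f, (w = s ∨ w = s' ∨ w = t ∨ w = v ∨ w = b) →
      (f = {s, s', t} ∨ f = {s, t, v} ∨ f = {s', t, v} ∨ f = {s, v, b} ∨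
        f = {s', v, b} ∨ f = {s, b, s'}) := by
    intro f hf w hw hw5
    rcases hw5 with h | h | h | h | h <;> rw [h] at hw
    · rcases L.face_of_4E M hs hf hw with h1 | h1 | h1 | h1 <;> (clear * - h1; tauto)
    · rcases L.face_of_4E M hs' hf hw with h1 | h1 | h1 | h1
      · exact Or.inl (h1.trans (triple_swap12 s' s t))
      · tauto
      · tauto
      · refine Or.inr (Or.inr (Or.inr (Or.inr (Or.inr ?_))))
        rw [h1]; ext z; simp; tauto
    · rcases hT f hf hw with h1 | h1 | h1 <;> (clear * - h1; tauto)
    · rcases hV f hf hw with h1 | h1 | h1 | h1 <;> (clear * - h1; tauto)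
    · rcases hB f hf hw with h1 | h1 | h1 <;> (clear * - h1; tauto)
  -- every vertex is one of s, s', t, v, b
  have hS : ∀ w : V, w = s ∨ w = s' ∨ w = t ∨ w = v ∨ w = b := by
    intro w
    have hconn := L.conn s w
    induction hconn with
    | refl => exact Or.inl rfl
    | tail _ hbc ih =>
      obtain ⟨hne, f, hf, hbf, hcf⟩ := hbc
      rcases hclass f hf _ hbf ih with h | h | h | h | h | h <;> rw [h] at hcf <;>
        · simp at hcf; clear * - hcf; tauto
  -- permutation facts
  have pA : ({s, s', t} : Finset V) = {t, s', s} :=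
    (triple_rot s s' t).trans ((triple_rot s' t s).trans (triple_swap23 t s s'))
  have pB : ({s, t, v} : Finset V) = {t, s, v} := triple_swap12 s t v
  have pC : ({s', t, v} : Finset V) = {t, v, s'} := triple_rot s' t v
  have pD : ({s, v, b} : Finset V) = {b, s, v} := (triple_rot s v b).trans (triple_rot v b s)
  have pE : ({s', v, b} : Finset V) = {b, v, s'} :=
    (triple_rot s' v b).trans (triple_swap12 v b s')
  have pF : ({s, b, s'} : Finset V) = {b, s', s} := triple_rot s b s'
  have hZ : ∀ i : ZMod 3, i = 0 ∨ i = 1 ∨ i = 2 := by decide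
  set c : ZMod 3 → V := fun i => if i = 0 then s else if i = 1 then v else s' with hc
  have e0 : c 0 = s := by simp [hc]
  have e1 : c 1 = v := by simp [hc, show (1 : ZMod 3) ≠ 0 from by decide]
  have e2 : c 2 = s' := by
    simp [hc, show (2 : ZMod 3) ≠ 0 from by decide, show (2 : ZMod 3) ≠ 1 from by decide]
  have e01 : (0 + 1 : ZMod 3) = 1 := by decide
  have e12 : (1 + 1 : ZMod 3) = 2 := by decide
  have e20 : (2 + 1 : ZMod 3) = 0 := by decide
  refine ⟨htb, ?_, ?_, ?_, ?_, ?_, ?_, ?_⟩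
  · -- injectivity
    intro i j hij
    rcases hZ i with hi | hi | hi <;> rcases hZ j with hj | hj | hj <;> subst hi <;> subst hj
    · rfl
    · rw [e0, e1] at hij; exact absurd hij hsv
    · rw [e0, e2] at hij; exact absurd hij hss'
    · rw [e1, e0] at hij; exact absurd hij hvs
    · rfl
    · rw [e1, e2] at hij; exact absurd hij hvs'
    · rw [e2, e0] at hij; exact absurd hij hs's
    · rw [e2, e1] at hij; exact absurd hij hs'v
    · rfl
  · -- t avoids the cycle
    intro i
    rcases hZ i with hi | hi | hi <;> subst hi
    · rw [e0]; exact hts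
    · rw [e1]; exact htv
    · rw [e2]; exact hts'
  · -- b avoids the cycle
    intro i
    rcases hZ i with hi | hi | hi <;> subst hi
    · rw [e0]; exact hbs
    · rw [e1]; exact hbv
    · rw [e2]; exact hbs'
  · -- vertex coverage
    intro w
    rcases hS w with h | h | h | h | h
    · exact Or.inr (Or.inr ⟨0, by rw [e0]; exact h⟩)
    · exact Or.inr (Or.inr ⟨2, by rw [e2]; exact h⟩)
    · exact Or.inl h
    · exact Or.inr (Or.inr ⟨1, by rw [e1]; exact h⟩)
    · exact Or.inr (Or.inl h)
  · -- t and b are not adjacent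
    rintro ⟨hne, f, hf, htf, hbf⟩
    rcases hT f hf htf with h | h | h <;> rw [h] at hbf <;> simp at hbf <;>
      · clear * - hbf hbs hbs' hbt hbv; tauto
  · -- cycle adjacency
    intro i
    rcases hZ i with hi | hi | hi <;> subst hi
    · rw [e01, e0, e1]; exact ⟨hsv, {s, t, v}, mF2, by simp, by simp⟩
    · rw [e12, e1, e2]; exact ⟨hvs', {s', t, v}, mF3, by simp, by simp⟩
    · rw [e20, e2, e0]; exact ⟨hs's, {s, s', t}, mF1, by simp, by simp⟩
  · -- the faces
    intro f
    constructor
    · intro hf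
      have hcard := L.card_eq_three f hf
      have hfn : f.Nonempty := Finset.card_pos.1 (by omega)
      obtain ⟨w, hw⟩ := hfn
      rcases hclass f hf w hw (hS w) with h | h | h | h | h | h
      · exact ⟨2, Or.inl (by rw [h, e20, e2, e0]; exact pA)⟩
      · exact ⟨0, Or.inl (by rw [h, e01, e0, e1]; exact pB)⟩
      · exact ⟨1, Or.inl (by rw [h, e12, e1, e2]; exact pC)⟩
      · exact ⟨0, Or.inr (by rw [h, e01, e0, e1]; exact pD)⟩
      · exact ⟨1, Or.inr (by rw [h, e12, e1, e2]; exact pE)⟩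
      · exact ⟨2, Or.inr (by rw [h, e20, e2, e0]; exact pF)⟩
    · rintro ⟨i, h | h⟩ <;> rcases hZ i with hi | hi | hi <;> subst hi <;> rw [h]
      · rw [e01, e0, e1, ← pB]; exact mF2
      · rw [e12, e1, e2, ← pC]; exact mF3
      · rw [e20, e2, e0, ← pA]; exact mF1
      · rw [e01, e0, e1, ← pD]; exact mF4
      · rw [e12, e1, e2, ← pE]; exact mF5
      · rw [e20, e2, e0, ← pF]; exact mF6
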